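/- Let f = Σ_n c_n x^n ∈ k[x^{±1}] satisfy c₀ = c₁ = 1, have at least one nonzero coefficient outside {0,1}, and λ₀ := min{val(c_n) : n ∈ ℤ∖{0,1}, c_n ≠ 0} > 0. Let g = Σ_n d_n x^n ∈ k[x^{±1}] satisfy val(d₀) = val(d₁) = 0, have at least one nonzero coefficient outside {0,1}, and λ₁ := min{val(d_n) : n ∈ ℤ∖{0,1}, d_n ≠ 0} > 0. Then there exists h₀ ∈ k[x^{±1}] all of whose coefficients have strictly positive valuation such that g₁ := g + h₀·f satisfies val((g₁)₀) = val((g₁)₁) = 0 and val((g₁)_n) ≥ λ₀ + λ₁ for all n ∈ ℤ∖{0,1}. -/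

import Mathlib

/-- `λ(F) = min { val(F_n) : n ∈ ℤ \ {0,1}, F_n ≠ 0 }` (as an infimum in `ℝ ∪ {∞}`). -/
noncomputable def lamv {k : Type*} [Field k] (val : k → WithTop ℝ) (F : ℤ →₀ k) : WithTop ℝ :=
  sInf {x : WithTop ℝ | ∃ n : ℤ, n ≠ 0 ∧ n ≠ 1 ∧ F n ≠ 0 ∧ val (F n) = x}

section Aux
variable {k : Type*} [Field k] (val : k → WithTop ℝ)
  (hval_mul : ∀ a b : k, val (a * b) = val a + val b)
  (hval_add : ∀ a b : k, min (val a) (val b) ≤ val (a + b))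
  (hval_top : ∀ a : k, val a = ⊤ ↔ a = 0)

include hval_mul hval_top in
lemma val_one' : val 1 = 0 := by
  have h : val 1 = val 1 + val 1 := by
    conv_lhs => rw [show (1:k) = 1 * 1 by ring, hval_mul]
  have hne : val 1 ≠ ⊤ := by simp [hval_top]
  cases hv : val 1 with
  | top => exact absurd hv hne
  | coe r =>
    rw [hv] at h
    norm_cast at h
    norm_num
    linarith

include hval_mul hval_top in
lemma val_negone' : val (-1) = 0 := by
  have h : val (-1) + val (-1) = 0 := by
    rw [← hval_mul]; norm_num; exact val_one' val hval_mul hval_top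
  have hne : val (-1) ≠ ⊤ := by simp [hval_top]
  cases hv : val (-1) with
  | top => exact absurd hv hne
  | coe r =>
    rw [hv] at h
    norm_cast at h
    norm_num
    linarith

include hval_mul hval_top in
lemma val_neg' (a : k) : val (-a) = val a := by
  rw [show -a = -1 * a by ring, hval_mul, val_negone' val hval_mul hval_top, zero_add]

include hval_mul hval_add hval_top in
lemma val_add_eq' {a b : k} (h : val a < val b) : val (a + b) = val a := by
  have h1 : val a ≤ val (a + b) := by
    have := hval_add a b
    rw [min_eq_left h.le] at this
    exact this
  have h2 : val a ≥ val (a + b) := by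
    have := hval_add (a + b) (-b)
    simp only [add_neg_cancel_right] at this
    rw [val_neg' val hval_mul hval_top] at this
    rcases min_cases (val (a+b)) (val b) with ⟨he, _⟩ | ⟨he, hlt⟩
    · rw [he] at this; exact this
    · rw [he] at this; exact absurd (lt_of_le_of_lt this h) (lt_irrefl _)
  exact le_antisymm h2 h1

include hval_top in
lemma val_zero' : val 0 = ⊤ := by simp [hval_top]

include hval_add hval_top in
lemma val_sum_le' {ι : Type*} (S : Finset ι) (φ : ι → k) (c : WithTop ℝ)
    (h : ∀ i ∈ S, c ≤ val (φ i)) : c ≤ val (∑ i ∈ S, φ i) := by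
  classical
  induction S using Finset.induction_on with
  | empty => simp [val_zero' val hval_top]
  | insert _ _ hnotmem ih =>
    rename_i a s
    rw [Finset.sum_insert hnotmem]
    refine le_trans ?_ (hval_add _ _)
    exact le_min (h a (Finset.mem_insert_self _ _))
      (ih fun i hi => h i (Finset.mem_insert_of_mem hi))

include hval_add hval_top in
lemma val_sum_lt' {ι : Type*} (S : Finset ι) (φ : ι → k)
    (h : ∀ i ∈ S, 0 < val (φ i)) : 0 < val (∑ i ∈ S, φ i) := by
  classical
  induction S using Finset.induction_on with
  | empty => simp [val_zero' val hval_top]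
  | insert _ _ hnotmem ih =>
    rename_i a s
    rw [Finset.sum_insert hnotmem]
    refine lt_of_lt_of_le ?_ (hval_add _ _)
    exact lt_min (h a (Finset.mem_insert_self _ _))
      (ih fun i hi => h i (Finset.mem_insert_of_mem hi))

include hval_top in
lemma lamv_le' (F : ℤ →₀ k) (n : ℤ) (hn0 : n ≠ 0) (hn1 : n ≠ 1) :
    lamv val F ≤ val (F n) := by
  by_cases hFn : F n = 0
  · rw [hFn, val_zero' val hval_top]; exact le_top
  set S : Set (WithTop ℝ) := {x | ∃ m : ℤ, m ≠ 0 ∧ m ≠ 1 ∧ F m ≠ 0 ∧ val (F m) = x} with hS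
  have hfin : S.Finite := by
    have : S ⊆ (fun m => val (F m)) '' (F.support : Set ℤ) := by
      rintro x ⟨m, _, _, hm, rfl⟩
      exact ⟨m, by simpa [Finsupp.mem_support_iff] using hm, rfl⟩
    exact Set.Finite.subset ((F.support : Set ℤ).toFinite.image _) this
  have hmem : val (F n) ∈ S := ⟨n, hn0, hn1, hFn, rfl⟩
  have hvne : val (F n) ≠ ⊤ := by simp [hval_top, hFn]
  obtain ⟨r, hr⟩ := WithTop.ne_top_iff_exists.mp hvne
  have hnsub : ¬ S ⊆ {⊤} := fun h => hvne (h hmem)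
  have hbdd : BddBelow S := hfin.bddBelow
  rw [lamv, ← hS, WithTop.sInf_eq hnsub hbdd]
  have hrA : r ∈ ((↑) ⁻¹' S : Set ℝ) := by simp [Set.mem_preimage, hr, hmem]
  have hAfin : ((↑) ⁻¹' S : Set ℝ).Finite :=
    Set.Finite.preimage (fun a _ b _ h => by exact_mod_cast h) hfin
  calc ((sInf ((↑) ⁻¹' S : Set ℝ) : ℝ) : WithTop ℝ) ≤ (r : WithTop ℝ) := by
        exact_mod_cast csInf_le hAfin.bddBelow hrA
    _ = val (F n) := hr

end Aux

noncomputable def auxH {k : Type*} [Field k] (g : ℤ →₀ k) : ℤ → k := fun s =>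
  if 1 ≤ s then ∑ j ∈ g.support, (if s < j then (-1:k)^((j-s).toNat) * g j else 0)
  else if s ≤ -1 then -∑ j ∈ g.support, (if j ≤ s then (-1:k)^((s-j).toNat) * g j else 0)
  else 0

lemma auxH_add {k : Type*} [Field k] (g : ℤ →₀ k) (n : ℤ) (h0 : n ≠ 0) (h1 : n ≠ 1) :
    auxH g n + auxH g (n - 1) = - g n := by
  classical
  by_cases hn : 2 ≤ n
  · rw [auxH, auxH, if_pos (by omega : (1:ℤ) ≤ n), if_pos (by omega : (1:ℤ) ≤ n - 1),
      ← Finset.sum_add_distrib]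
    have : ∀ j ∈ g.support,
        ((if n < j then (-1:k)^((j-n).toNat) * g j else 0) +
         (if n - 1 < j then (-1:k)^((j-(n-1)).toNat) * g j else 0))
        = if j = n then -g j else 0 := by
      intro j _
      rcases lt_trichotomy j n with hj | hj | hj
      · rw [if_neg (by omega), if_neg (by omega), if_neg (by omega)]; ring
      · subst hj
        rw [if_neg (by omega), if_pos (by omega), if_pos rfl]
        norm_num
      · rw [if_pos hj, if_pos (by omega), if_neg (by omega)]
        have ht : (j - (n-1)).toNat = (j - n).toNat + 1 := by omega
        rw [ht, pow_succ]
        ring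
    rw [Finset.sum_congr rfl this, Finset.sum_ite_eq' g.support n (fun j => -g j)]
    split_ifs with h
    · rfl
    · rw [Finsupp.notMem_support_iff.mp h, neg_zero]
  · have hn' : n ≤ -1 := by omega
    rw [auxH, auxH, if_neg (by omega : ¬ (1:ℤ) ≤ n), if_pos hn',
      if_neg (by omega : ¬ (1:ℤ) ≤ n - 1), if_pos (by omega : n - 1 ≤ -1),
      ← neg_add, ← Finset.sum_add_distrib]
    have : ∀ j ∈ g.support,
        ((if j ≤ n then (-1:k)^((n-j).toNat) * g j else 0) +
         (if j ≤ n - 1 then (-1:k)^((n-1-j).toNat) * g j else 0))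
        = if j = n then g j else 0 := by
      intro j _
      rcases lt_trichotomy j n with hj | hj | hj
      · rw [if_pos (by omega), if_pos (by omega), if_neg (by omega)]
        have ht : (n - j).toNat = (n - 1 - j).toNat + 1 := by omega
        rw [ht, pow_succ]
        ring
      · subst hj
        rw [if_pos le_rfl, if_neg (by omega), if_pos rfl]
        norm_num
      · rw [if_neg (by omega), if_neg (by omega), if_neg (by omega)]; ring
    rw [Finset.sum_congr rfl this, Finset.sum_ite_eq' g.support n (fun j => g j)]
    split_ifs with h
    · rfl
    · rw [Finsupp.notMem_support_iff.mp h, neg_zero]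

section Main
variable {k : Type*} [Field k] (val : k → WithTop ℝ)
  (hval_mul : ∀ a b : k, val (a * b) = val a + val b)
  (hval_add : ∀ a b : k, min (val a) (val b) ≤ val (a + b))
  (hval_top : ∀ a : k, val a = ⊤ ↔ a = 0)

include hval_mul hval_top in
lemma val_neg_one_pow' (m : ℕ) : val ((-1:k)^m) = 0 := by
  rcases neg_one_pow_eq_or k m with h | h <;> rw [h]
  · exact val_one' val hval_mul hval_top
  · exact val_negone' val hval_mul hval_top

include hval_mul hval_add hval_top in
lemma lamv_le_auxH (g : ℤ →₀ k) (s : ℤ) : lamv val g ≤ val (auxH g s) := by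
  classical
  have hterm : ∀ (c : ℤ → ℤ) (P : ℤ → Prop) [DecidablePred P],
      (∀ j, P j → j ≠ 0 ∧ j ≠ 1) →
      ∀ j ∈ g.support, lamv val g ≤
        val (if P j then (-1:k)^((c j).toNat) * g j else 0) := by
    intro c P _ hP j _
    by_cases h : P j
    · rw [if_pos h, hval_mul, val_neg_one_pow' val hval_mul hval_top, zero_add]
      exact lamv_le' val hval_top g j (hP j h).1 (hP j h).2
    · rw [if_neg h, val_zero' val hval_top]; exact le_top
  rw [auxH]
  split_ifs with hs1 hs2
  · exact val_sum_le' val hval_add hval_top _ _ _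
      (hterm (fun j => j - s) (fun j => s < j) (fun j hj => by omega))
  · rw [val_neg' val hval_mul hval_top]
    exact val_sum_le' val hval_add hval_top _ _ _
      (hterm (fun j => s - j) (fun j => j ≤ s) (fun j hj => by omega))
  · rw [val_zero' val hval_top]; exact le_top

end Main


theorem stmt4 {k : Type*} [Field k] (val : k → WithTop ℝ)
    (hval_mul : ∀ a b : k, val (a * b) = val a + val b)
    (hval_add : ∀ a b : k, min (val a) (val b) ≤ val (a + b))
    (hval_top : ∀ a : k, val a = ⊤ ↔ a = 0)
    (f g : ℤ →₀ k)
    (hf0 : f 0 = 1) (hf1 : f 1 = 1)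
    (hfne : ∃ n : ℤ, n ≠ 0 ∧ n ≠ 1 ∧ f n ≠ 0)
    (hlam0 : 0 < lamv val f)
    (hg0 : val (g 0) = (0 : WithTop ℝ)) (hg1 : val (g 1) = (0 : WithTop ℝ))
    (hgne : ∃ n : ℤ, n ≠ 0 ∧ n ≠ 1 ∧ g n ≠ 0)
    (hlam1 : 0 < lamv val g) :
    ∃ h₀ : ℤ →₀ k,
      (∀ s : ℤ, (0 : WithTop ℝ) < val (h₀ s)) ∧
      val (g 0 + h₀.sum fun s a => a * f (0 - s)) = (0 : WithTop ℝ) ∧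
      val (g 1 + h₀.sum fun s a => a * f (1 - s)) = (0 : WithTop ℝ) ∧
      ∀ n : ℤ, n ≠ 0 → n ≠ 1 →
        lamv val f + lamv val g ≤ val (g n + h₀.sum fun s a => a * f (n - s)) := by
  classical
  obtain ⟨m₀, hm₀0, hm₀1, hm₀⟩ := hgne
  have hT : g.support.Nonempty := ⟨m₀, Finsupp.mem_support_iff.mpr hm₀⟩
  set A : ℤ := g.support.min' hT with hA
  set B : ℤ := g.support.max' hT with hB
  have hsupp : ∀ s : ℤ, auxH g s ≠ 0 → s ∈ Finset.Icc (min A 1) (max B 1) := by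
    intro s hs
    rw [auxH] at hs
    rw [Finset.mem_Icc]
    split_ifs at hs with h1 h2
    · obtain ⟨j, hj, hjne⟩ := Finset.exists_ne_zero_of_sum_ne_zero hs
      have hsj : s < j := by by_contra h; exact hjne (if_neg h)
      have := g.support.le_max' j hj
      constructor
      · exact le_trans (min_le_right _ _) h1
      · omega
    · rw [neg_ne_zero] at hs
      obtain ⟨j, hj, hjne⟩ := Finset.exists_ne_zero_of_sum_ne_zero hs
      have hsj : j ≤ s := by by_contra h; exact hjne (if_neg h)
      have := g.support.min'_le j hj
      constructor
      · omega
      · exact le_trans (by omega) (le_max_right B 1)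
    · exact absurd rfl hs
  refine ⟨Finsupp.onFinset _ (auxH g) hsupp, ?_, ?_, ?_, ?_⟩
  case _ =>
    intro s
    exact lt_of_lt_of_le hlam1 (lamv_le_auxH val hval_mul hval_add hval_top g s)
  -- common facts
  all_goals {
    have happ : ∀ s : ℤ, (Finsupp.onFinset _ (auxH g) hsupp) s = auxH g s := fun s => rfl
    have hHle : ∀ s : ℤ, lamv val g ≤ val (auxH g s) :=
      lamv_le_auxH val hval_mul hval_add hval_top g
    have hfnn : ∀ m : ℤ, 0 ≤ val (f m) := by
      intro m
      by_cases hm0 : m = 0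
      · rw [hm0, hf0, val_one' val hval_mul hval_top]
      by_cases hm1 : m = 1
      · rw [hm1, hf1, val_one' val hval_mul hval_top]
      exact le_trans hlam0.le (lamv_le' val hval_top f m hm0 hm1)
    first
    | -- cases n = 0, n = 1
      (first
        | (have hn01 : val (g 0) = (0 : WithTop ℝ) := hg0
           have hpos : 0 < val ((Finsupp.onFinset _ (auxH g) hsupp).sum
              fun s a => a * f ((0:ℤ) - s)) := by
             rw [Finsupp.sum]
             refine val_sum_lt' val hval_add hval_top _ _ (fun s _ => ?_)
             rw [happ, hval_mul]
             exact lt_of_lt_of_le (lt_of_lt_of_le hlam1 (hHle s))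
               (le_add_of_nonneg_right (hfnn _))
           rw [val_add_eq' val hval_mul hval_add hval_top (hn01 ▸ hpos : val (g 0) < _)]
           exact hn01)
        | (have hn01 : val (g 1) = (0 : WithTop ℝ) := hg1
           have hpos : 0 < val ((Finsupp.onFinset _ (auxH g) hsupp).sum
              fun s a => a * f ((1:ℤ) - s)) := by
             rw [Finsupp.sum]
             refine val_sum_lt' val hval_add hval_top _ _ (fun s _ => ?_)
             rw [happ, hval_mul]
             exact lt_of_lt_of_le (lt_of_lt_of_le hlam1 (hHle s))
               (le_add_of_nonneg_right (hfnn _))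
           rw [val_add_eq' val hval_mul hval_add hval_top (hn01 ▸ hpos : val (g 1) < _)]
           exact hn01))
    | -- general case
      (intro n hn0 hn1
       set h₀ := Finsupp.onFinset _ (auxH g) hsupp with hh₀
       set U : Finset ℤ := insert n (insert (n - 1) h₀.support) with hU
       have hnU : n ∈ U := Finset.mem_insert_self _ _
       have hn1U : n - 1 ∈ U := Finset.mem_insert_of_mem (Finset.mem_insert_self _ _)
       set F' : ℤ → k := fun m => f m - (if m = 0 then 1 else 0) - (if m = 1 then 1 else 0)
         with hF'
       have hsub : h₀.support ⊆ U :=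
         (Finset.subset_insert _ _).trans (Finset.subset_insert _ _)
       have hsum : (h₀.sum fun s a => a * f (n - s)) = ∑ s ∈ U, auxH g s * f (n - s) :=
         Finsupp.sum_of_support_subset h₀ hsub (fun s a => a * f (n - s))
           (fun i _ => zero_mul _)
       have step : ∀ s ∈ U, auxH g s * f (n - s)
           = auxH g s * F' (n - s)
             + ((if s = n then auxH g n else 0) + (if s = n - 1 then auxH g (n - 1) else 0)) := by
         intro s _
         have e0 : (if (n - s : ℤ) = 0 then (1:k) else 0) = (if s = n then 1 else 0) := by
           split_ifs with h h' h' <;> first | rfl | omega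
         have e1 : (if (n - s : ℤ) = 1 then (1:k) else 0) = (if s = n - 1 then 1 else 0) := by
           split_ifs with h h' h' <;> first | rfl | omega
         simp only [hF', e0, e1]
         by_cases h : s = n
         · subst h
           rw [if_pos rfl, if_neg (by omega), if_pos rfl, if_neg (by omega)]
           ring
         by_cases h' : s = n - 1
         · subst h'
           rw [if_neg h, if_pos rfl, if_neg h, if_pos rfl]
           ring
         · rw [if_neg h, if_neg h', if_neg h, if_neg h']
           ring
       have key : g n + ∑ s ∈ U, auxH g s * f (n - s) = ∑ s ∈ U, auxH g s * F' (n - s) := by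
         rw [Finset.sum_congr rfl step, Finset.sum_add_distrib, Finset.sum_add_distrib,
           Finset.sum_ite_eq' U n (fun _ => auxH g n),
           Finset.sum_ite_eq' U (n - 1) (fun _ => auxH g (n - 1)),
           if_pos hnU, if_pos hn1U]
         have := auxH_add g n hn0 hn1
         linear_combination this
       rw [hsum, key]
       refine val_sum_le' val hval_add hval_top _ _ _ (fun s _ => ?_)
       rw [hval_mul]
       have hF'le : lamv val f ≤ val (F' (n - s)) := by
         simp only [hF']
         by_cases h0 : (n - s : ℤ) = 0
         · rw [if_pos h0, if_neg (by omega), h0, hf0]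
           simp [val_zero' val hval_top]
         by_cases h1 : (n - s : ℤ) = 1
         · rw [if_neg h0, if_pos h1, h1, hf1]
           simp [val_zero' val hval_top]
         · rw [if_neg h0, if_neg h1, sub_zero, sub_zero]
           exact lamv_le' val hval_top f _ h0 h1
       calc lamv val f + lamv val g ≤ val (F' (n - s)) + val (auxH g s) :=
             add_le_add hF'le (hHle s)
         _ = val (auxH g s) + val (F' (n - s)) := add_comm _ _)
  }
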